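/- arXiv:2603.19110 — 2 statements merged into one kernel-verified Lean document; each statement's English description precedes it below -/
import Mathlib

section
/- Let n ≥ 1, let p ∈ [0, 3/4], let b ∈ F₂^{2n} be a fixed vector, and let e be a random vector distributed according to D_p^{⊗n}. Then the dot product b·e ∈ F₂ satisfies (1 − (1 − (4/3)p)^{|b|/2})/2 ≤ Pr[b·e = 1] ≤ 1/2, where the exponent |b|/2 is a real power of the nonnegative base 1 − (4/3)p. -/
open scoped BigOperators Classical

/-- Probability of a single pair under the depolarizing distribution `D_p`. -/
noncomputable def pairProb (p : ℝ) (a b : ZMod 2) : ℝ :=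
  if a = 0 ∧ b = 0 then 1 - p else p / 3

/-- Density of the depolarizing distribution `D_p^{⊗n}` on `F₂^{2n}`. -/
noncomputable def depDensity (p : ℝ) (n : ℕ) (e : (Fin n ⊕ Fin n) → ZMod 2) : ℝ :=
  ∏ j : Fin n, pairProb p (e (Sum.inl j)) (e (Sum.inr j))

/-- Hamming weight of a vector over `F₂`. -/
def hWt {ι : Type*} [Fintype ι] (v : ι → ZMod 2) : ℕ :=
  (Finset.univ.filter fun i => v i ≠ 0).card

/-- `Pr[b·e = 1]` for `e ∼ D_p^{⊗n}` and a fixed vector `b ∈ F₂^{2n}`. -/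
noncomputable def prDotOne (n : ℕ) (p : ℝ) (b : (Fin n ⊕ Fin n) → ZMod 2) : ℝ :=
  ∑ e ∈ Finset.univ.filter
      (fun e : (Fin n ⊕ Fin n) → ZMod 2 => (∑ i, b i * e i) = 1),
    depDensity p n e

noncomputable def chi (x : ZMod 2) : ℝ := if x = 0 then 1 else -1

lemma chi_add (x y : ZMod 2) : chi (x + y) = chi x * chi y := by
  have hz : ∀ z : ZMod 2, z = 0 ∨ z = 1 := by decide
  have h11 : (1:ZMod 2) + 1 = 0 := by decide
  have h10 : (1:ZMod 2) ≠ 0 := by decide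
  rcases hz x with rfl | rfl <;> rcases hz y with rfl | rfl <;> simp [chi, h11, h10]

lemma chi_sum {ι : Type*} (s : Finset ι) (f : ι → ZMod 2) :
    chi (∑ i ∈ s, f i) = ∏ i ∈ s, chi (f i) := by
  induction s using Finset.cons_induction with
  | empty => simp [chi]
  | cons a s ha ih => rw [Finset.sum_cons, Finset.prod_cons, chi_add, ih]

lemma sum_zmod2 (f : ZMod 2 → ℝ) : ∑ x : ZMod 2, f x = f 0 + f 1 := by
  rw [show (Finset.univ : Finset (ZMod 2)) = {0, 1} from by decide]
  simp

lemma pair_sum (p : ℝ) (b1 b2 : ZMod 2) :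
    (∑ x : ZMod 2 × ZMod 2, pairProb p x.1 x.2 * (chi (b1 * x.1) * chi (b2 * x.2))) =
      if b1 = 0 ∧ b2 = 0 then 1 else 1 - 4/3 * p := by
  have hz : ∀ z : ZMod 2, z = 0 ∨ z = 1 := by decide
  have h11 : (1:ZMod 2) + 1 = 0 := by decide
  have h10 : (1:ZMod 2) ≠ 0 := by decide
  rcases hz b1 with rfl | rfl <;> rcases hz b2 with rfl | rfl <;>
    simp [Fintype.sum_prod_type, sum_zmod2, pairProb, chi, h10] <;> ring

def pairEquiv (n : ℕ) : (Fin n → ZMod 2 × ZMod 2) ≃ ((Fin n ⊕ Fin n) → ZMod 2) where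
  toFun f := Sum.elim (fun j => (f j).1) (fun j => (f j).2)
  invFun e j := (e (Sum.inl j), e (Sum.inr j))
  left_inv f := by funext j; simp
  right_inv e := by funext i; cases i <;> simp

lemma key (p : ℝ) (n : ℕ) (b : (Fin n ⊕ Fin n) → ZMod 2) :
    (∑ e : (Fin n ⊕ Fin n) → ZMod 2, depDensity p n e * chi (∑ i, b i * e i)) =
      ∏ j : Fin n, (if b (Sum.inl j) = 0 ∧ b (Sum.inr j) = 0 then (1:ℝ) else 1 - 4/3 * p) := by
  have step1 : ∀ e : (Fin n ⊕ Fin n) → ZMod 2,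
      depDensity p n e * chi (∑ i, b i * e i) =
      ∏ j : Fin n, (pairProb p (e (Sum.inl j)) (e (Sum.inr j)) *
        (chi (b (Sum.inl j) * e (Sum.inl j)) * chi (b (Sum.inr j) * e (Sum.inr j)))) := by
    intro e
    simp only [Finset.prod_mul_distrib]
    rw [chi_sum, Fintype.prod_sum_type, depDensity]
  simp only [step1]
  rw [← Equiv.sum_comp (pairEquiv n)
    (fun e => ∏ j : Fin n, (pairProb p (e (Sum.inl j)) (e (Sum.inr j)) *
      (chi (b (Sum.inl j) * e (Sum.inl j)) * chi (b (Sum.inr j) * e (Sum.inr j)))))]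
  have : ∀ f : Fin n → ZMod 2 × ZMod 2,
      (∏ j : Fin n, (pairProb p ((pairEquiv n f) (Sum.inl j)) ((pairEquiv n f) (Sum.inr j)) *
        (chi (b (Sum.inl j) * (pairEquiv n f) (Sum.inl j)) *
         chi (b (Sum.inr j) * (pairEquiv n f) (Sum.inr j))))) =
      ∏ j : Fin n, (pairProb p (f j).1 (f j).2 *
        (chi (b (Sum.inl j) * (f j).1) * chi (b (Sum.inr j) * (f j).2))) := by
    intro f; rfl
  simp only [this]
  rw [← Fintype.prod_sum (fun j (y : ZMod 2 × ZMod 2) => pairProb p y.1 y.2 *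
    (chi (b (Sum.inl j) * y.1) * chi (b (Sum.inr j) * y.2)))]
  exact Finset.prod_congr rfl fun j _ => pair_sum p (b (Sum.inl j)) (b (Sum.inr j))

lemma depDensity_norm (p : ℝ) (n : ℕ) :
    (∑ e : (Fin n ⊕ Fin n) → ZMod 2, depDensity p n e) = 1 := by
  have h := key p n (fun _ => 0)
  simpa [chi] using h

/-- For `p ∈ [0, 3/4]`, a fixed `b ∈ F₂^{2n}`, and `e ∼ D_p^{⊗n}`:
`(1 - (1 - (4/3)p)^{|b|/2})/2 ≤ Pr[b·e = 1] ≤ 1/2`, where the exponent `|b|/2` is a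
real power of the nonnegative base `1 - (4/3)p`. -/
theorem stmt13 (n : ℕ) (hn : 1 ≤ n) (p : ℝ) (hp0 : 0 ≤ p) (hp1 : p ≤ 3 / 4)
    (b : (Fin n ⊕ Fin n) → ZMod 2) :
    (1 - (1 - (4 / 3) * p) ^ ((hWt b : ℝ) / 2)) / 2 ≤ prDotOne n p b ∧
      prDotOne n p b ≤ 1 / 2 := by
  classical
  set q : ℝ := 1 - 4/3 * p with hqdef
  have hq0 : 0 ≤ q := by simp only [hqdef]; linarith
  have hq1 : q ≤ 1 := by simp only [hqdef]; linarith
  set K := Finset.univ.filter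
    (fun j : Fin n => ¬(b (Sum.inl j) = 0 ∧ b (Sum.inr j) = 0)) with hKdef
  set k := K.card with hkdef
  -- B = q ^ k
  have hB : (∏ j : Fin n,
      (if b (Sum.inl j) = 0 ∧ b (Sum.inr j) = 0 then (1:ℝ) else 1 - 4/3 * p)) = q ^ k := by
    rw [Finset.prod_ite, Finset.prod_const, Finset.prod_const, one_pow, one_mul]
  -- weight bounds
  set A := Finset.univ.filter (fun j : Fin n => b (Sum.inl j) ≠ 0) with hAdef
  set C := Finset.univ.filter (fun j : Fin n => b (Sum.inr j) ≠ 0) with hCdef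
  have hAK : A ⊆ K := by
    intro j hj
    simp only [hAdef, hKdef, Finset.mem_filter, Finset.mem_univ, true_and] at *
    tauto
  have hCK : C ⊆ K := by
    intro j hj
    simp only [hCdef, hKdef, Finset.mem_filter, Finset.mem_univ, true_and] at *
    tauto
  have hKAC : K ⊆ A ∪ C := by
    intro j hj
    simp only [hAdef, hCdef, hKdef, Finset.mem_filter, Finset.mem_univ, true_and,
      Finset.mem_union] at *
    tauto
  have hsplit : hWt b = A.card + C.card := by
    rw [hWt, Finset.card_filter, Finset.card_filter, Finset.card_filter,
      Fintype.sum_sum_type]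
  have hwk : hWt b ≤ 2 * k := by
    have h1 : A.card ≤ k := Finset.card_le_card hAK
    have h2 : C.card ≤ k := Finset.card_le_card hCK
    omega
  have hkw : k ≤ hWt b := by
    have := (Finset.card_le_card hKAC).trans (Finset.card_union_le A C)
    omega
  -- probability formula
  have hnorm := depDensity_norm p n
  have hkey := key p n b
  rw [hB] at hkey
  rw [← Finset.sum_filter_add_sum_filter_not Finset.univ
    (fun e : (Fin n ⊕ Fin n) → ZMod 2 => (∑ i, b i * e i) = 1)] at hkey hnorm
  have zmod2 : ∀ x : ZMod 2, ¬ x = 1 → x = 0 := by decide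
  have hs1 : (∑ e ∈ Finset.univ.filter
      (fun e : (Fin n ⊕ Fin n) → ZMod 2 => (∑ i, b i * e i) = 1),
      depDensity p n e * chi (∑ i, b i * e i)) = - prDotOne n p b := by
    rw [prDotOne, ← Finset.sum_neg_distrib]
    refine Finset.sum_congr rfl ?_
    intro e he
    rw [Finset.mem_filter] at he
    rw [he.2]
    simp [chi]
  have hs2 : (∑ e ∈ Finset.univ.filter
      (fun e : (Fin n ⊕ Fin n) → ZMod 2 => ¬(∑ i, b i * e i) = 1),
      depDensity p n e * chi (∑ i, b i * e i)) =
      ∑ e ∈ Finset.univ.filter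
      (fun e : (Fin n ⊕ Fin n) → ZMod 2 => ¬(∑ i, b i * e i) = 1),
      depDensity p n e := by
    refine Finset.sum_congr rfl ?_
    intro e he
    rw [Finset.mem_filter] at he
    rw [zmod2 _ he.2]
    simp [chi]
  rw [hs1, hs2] at hkey
  have hPr : prDotOne n p b = (1 - q ^ k) / 2 := by
    have hPr' : prDotOne n p b = ∑ e ∈ Finset.univ.filter
      (fun e : (Fin n ⊕ Fin n) → ZMod 2 => (∑ i, b i * e i) = 1),
      depDensity p n e := rfl
    rw [← hPr'] at hnorm
    linarith
  -- final bounds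
  have hqk0 : 0 ≤ q ^ k := pow_nonneg hq0 k
  constructor
  · rw [hPr]
    have hkey2 : q ^ k ≤ q ^ ((hWt b : ℝ) / 2) := by
      rw [← Real.rpow_natCast q k]
      rcases eq_or_lt_of_le hq0 with h0 | h0
      · rcases Nat.eq_zero_or_pos (hWt b) with hw | hw
        · have hk0 : k = 0 := by omega
          simp [hk0, hw]
        · have hwpos : (0:ℝ) < (hWt b : ℝ) / 2 := by positivity
          have hk1 : 1 ≤ k := by omega
          rw [← h0, Real.zero_rpow (by positivity), Real.zero_rpow (ne_of_gt hwpos)]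
      · exact Real.rpow_le_rpow_of_exponent_ge h0 hq1 (by
          rw [div_le_iff₀ (by norm_num : (0:ℝ) < 2)]
          have : (hWt b : ℝ) ≤ 2 * (k : ℝ) := by exact_mod_cast hwk
          linarith)
    linarith
  · rw [hPr]
    linarith
end

section
/- Let n ≥ 2 and let r' ∈ F₂^{2n} be a vector whose (n+1)-st coordinate equals 1. Define the linear map C₀ : F₂^{2n} → F₂^{2n} on the standard basis by C₀(e₁) = e₁, C₀(f₁) = r', C₀(e_j) = e_j + (r' ⊙ e_j)·e₁ and C₀(f_j) = f_j + (r' ⊙ f_j)·e₁ for 2 ≤ j ≤ n. Then C₀ preserves the symplectic inner product: C₀(u) ⊙ C₀(v) = u ⊙ v for all u, v ∈ F₂^{2n}. -/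
open scoped BigOperators Classical

/-- The symplectic inner product on `F₂^{2n}` (coordinates indexed by `Fin n ⊕ Fin n`). -/
def symp {n : ℕ} (u v : (Fin n ⊕ Fin n) → ZMod 2) : ZMod 2 :=
  ∑ i : Fin n, (u (Sum.inl i) * v (Sum.inr i) + u (Sum.inr i) * v (Sum.inl i))

/-- The standard basis vector `e_i` of `F₂^{2n}` (indicator of coordinate `inl i`). -/
def stdE (n : ℕ) (i : Fin n) : (Fin n ⊕ Fin n) → ZMod 2 :=
  fun r => if r = Sum.inl i then 1 else 0

/-- The standard basis vector `f_i` of `F₂^{2n}` (indicator of coordinate `inr i`). -/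
def stdF (n : ℕ) (i : Fin n) : (Fin n ⊕ Fin n) → ZMod 2 :=
  fun r => if r = Sum.inr i then 1 else 0

def sgl (n : ℕ) (k : Fin n ⊕ Fin n) : (Fin n ⊕ Fin n) → ZMod 2 :=
  fun r => if r = k then 1 else 0

lemma sgl_inl {n : ℕ} (i : Fin n) : sgl n (Sum.inl i) = stdE n i := rfl
lemma sgl_inr {n : ℕ} (i : Fin n) : sgl n (Sum.inr i) = stdF n i := rfl

lemma symp_comm {n : ℕ} (u v : (Fin n ⊕ Fin n) → ZMod 2) : symp u v = symp v u := by
  unfold symp; apply Finset.sum_congr rfl; intros; ring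

lemma symp_self {n : ℕ} (u : (Fin n ⊕ Fin n) → ZMod 2) : symp u u = 0 := by
  unfold symp
  apply Finset.sum_eq_zero
  intro i _
  rw [mul_comm (u (Sum.inr i))]
  exact CharTwo.add_self_eq_zero _

lemma symp_zero_left {n : ℕ} (v : (Fin n ⊕ Fin n) → ZMod 2) : symp 0 v = 0 := by
  simp [symp]

lemma symp_add_left {n : ℕ} (u u' v : (Fin n ⊕ Fin n) → ZMod 2) :
    symp (u + u') v = symp u v + symp u' v := by
  unfold symp; rw [← Finset.sum_add_distrib]
  apply Finset.sum_congr rfl; intros; simp [Pi.add_apply]; ring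

lemma symp_smul_left {n : ℕ} (c : ZMod 2) (u v : (Fin n ⊕ Fin n) → ZMod 2) :
    symp (c • u) v = c * symp u v := by
  unfold symp; rw [Finset.mul_sum]
  apply Finset.sum_congr rfl; intros; simp [Pi.smul_apply, smul_eq_mul]; ring

lemma symp_add_right {n : ℕ} (u v v' : (Fin n ⊕ Fin n) → ZMod 2) :
    symp u (v + v') = symp u v + symp u v' := by
  rw [symp_comm, symp_add_left, symp_comm v u, symp_comm v' u]

lemma symp_smul_right {n : ℕ} (c : ZMod 2) (u v : (Fin n ⊕ Fin n) → ZMod 2) :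
    symp u (c • v) = c * symp u v := by
  rw [symp_comm, symp_smul_left, symp_comm]

lemma symp_sum_left {n : ℕ} {ι : Type*} (s : Finset ι) (g : ι → ((Fin n ⊕ Fin n) → ZMod 2))
    (v : (Fin n ⊕ Fin n) → ZMod 2) :
    symp (∑ k ∈ s, g k) v = ∑ k ∈ s, symp (g k) v := by
  induction s using Finset.induction_on with
  | empty => simp [symp_zero_left]
  | insert _ _ h ih => simp [Finset.sum_insert h, symp_add_left, ih]

lemma symp_sum_right {n : ℕ} {ι : Type*} (s : Finset ι) (g : ι → ((Fin n ⊕ Fin n) → ZMod 2))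
    (u : (Fin n ⊕ Fin n) → ZMod 2) :
    symp u (∑ k ∈ s, g k) = ∑ k ∈ s, symp u (g k) := by
  rw [symp_comm, symp_sum_left]
  exact Finset.sum_congr rfl fun k _ => symp_comm _ _

lemma sUE {n : ℕ} (u : (Fin n ⊕ Fin n) → ZMod 2) (i : Fin n) :
    symp u (stdE n i) = u (Sum.inr i) := by
  simp [symp, stdE, Finset.sum_ite_eq']

lemma sUF {n : ℕ} (u : (Fin n ⊕ Fin n) → ZMod 2) (i : Fin n) :
    symp u (stdF n i) = u (Sum.inl i) := by
  simp [symp, stdF, Finset.sum_ite_eq']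

lemma sEU {n : ℕ} (u : (Fin n ⊕ Fin n) → ZMod 2) (i : Fin n) :
    symp (stdE n i) u = u (Sum.inr i) := by rw [symp_comm, sUE]

lemma sFU {n : ℕ} (u : (Fin n ⊕ Fin n) → ZMod 2) (i : Fin n) :
    symp (stdF n i) u = u (Sum.inl i) := by rw [symp_comm, sUF]

lemma sEE {n : ℕ} (i j : Fin n) : symp (stdE n i) (stdE n j) = 0 := by
  rw [sUE]; simp [stdE]

lemma sFF {n : ℕ} (i j : Fin n) : symp (stdF n i) (stdF n j) = 0 := by
  rw [sUF]; simp [stdF]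

lemma sEF {n : ℕ} (i j : Fin n) : symp (stdE n i) (stdF n j) = if i = j then 1 else 0 := by
  rw [sUF]; simp [stdE, Sum.inl.injEq, eq_comm]

lemma sFE {n : ℕ} (i j : Fin n) : symp (stdF n i) (stdE n j) = if i = j then 1 else 0 := by
  rw [sUE]; simp [stdF, eq_comm]

lemma hdec {n : ℕ} (w : (Fin n ⊕ Fin n) → ZMod 2) :
    w = ∑ k : Fin n ⊕ Fin n, w k • sgl n k := by
  funext r
  simp [sgl, Finset.sum_apply, Finset.sum_ite_eq]

lemma symp_expand {n : ℕ}
    (T : ((Fin n ⊕ Fin n) → ZMod 2) →ₗ[ZMod 2] ((Fin n ⊕ Fin n) → ZMod 2))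
    (u v : (Fin n ⊕ Fin n) → ZMod 2) :
    symp (T u) (T v)
      = ∑ k : Fin n ⊕ Fin n, ∑ l : Fin n ⊕ Fin n,
          u k * (v l * symp (T (sgl n k)) (T (sgl n l))) := by
  conv_lhs => rw [hdec u, hdec v]
  rw [map_sum, map_sum, symp_sum_left]
  apply Finset.sum_congr rfl; intro k _
  rw [map_smul, symp_smul_left, symp_sum_right, Finset.mul_sum]
  apply Finset.sum_congr rfl; intro l _
  rw [map_smul, symp_smul_right]

/-- Let `r' ∈ F₂^{2n}` have `(n+1)`-st coordinate (the `f₁`-coordinate) equal to `1`,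
and let `C₀` be the linear map with `C₀ e₁ = e₁`, `C₀ f₁ = r'`,
`C₀ e_j = e_j + (r' ⊙ e_j)·e₁` and `C₀ f_j = f_j + (r' ⊙ f_j)·e₁` for `j ≥ 2`.
Then `C₀` preserves the symplectic inner product. -/
theorem stmt15 (n : ℕ) (hn : 2 ≤ n) (r' : (Fin n ⊕ Fin n) → ZMod 2)
    (hr : r' (Sum.inr ⟨0, by omega⟩) = 1)
    (C₀ : ((Fin n ⊕ Fin n) → ZMod 2) →ₗ[ZMod 2] ((Fin n ⊕ Fin n) → ZMod 2))
    (h1 : C₀ (stdE n ⟨0, by omega⟩) = stdE n ⟨0, by omega⟩)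
    (h2 : C₀ (stdF n ⟨0, by omega⟩) = r')
    (h3 : ∀ j : Fin n, j ≠ ⟨0, by omega⟩ →
      C₀ (stdE n j) = stdE n j + symp r' (stdE n j) • stdE n ⟨0, by omega⟩)
    (h4 : ∀ j : Fin n, j ≠ ⟨0, by omega⟩ →
      C₀ (stdF n j) = stdF n j + symp r' (stdF n j) • stdE n ⟨0, by omega⟩) :
    ∀ u v : (Fin n ⊕ Fin n) → ZMod 2, symp (C₀ u) (C₀ v) = symp u v := by
  intro u v
  set z : Fin n := ⟨0, by omega⟩ with hz
  have img : ∀ k : Fin n ⊕ Fin n, k ≠ Sum.inr z →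
      ∃ c : ZMod 2, C₀ (sgl n k) = sgl n k + c • stdE n z ∧
        symp r' (sgl n k) + c = sgl n k (Sum.inl z) := by
    rintro (i | i) hk
    · by_cases hi : i = z
      · refine ⟨0, ?_, ?_⟩
        · subst hi; rw [sgl_inl, h1]; simp
        · subst hi; rw [sgl_inl, sUE, hr, add_zero]; simp [stdE]
      · refine ⟨symp r' (stdE n i), ?_, ?_⟩
        · rw [sgl_inl]; exact h3 i hi
        · rw [sgl_inl, CharTwo.add_self_eq_zero]
          simp [stdE, Ne.symm hi]
    · have hi : i ≠ z := fun h => hk (by rw [h])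
      refine ⟨symp r' (stdF n i), ?_, ?_⟩
      · rw [sgl_inr]; exact h4 i hi
      · rw [sgl_inr, CharTwo.add_self_eq_zero]; simp [sgl, stdF]
  have sglz : ∀ k : Fin n ⊕ Fin n, k ≠ Sum.inr z → sgl n k (Sum.inr z) = 0 := by
    intro k hk; simp [sgl, Ne.symm hk]
  have keyA : ∀ l : Fin n ⊕ Fin n, l ≠ Sum.inr z →
      symp (C₀ (sgl n (Sum.inr z))) (C₀ (sgl n l)) = symp (sgl n (Sum.inr z)) (sgl n l) := by
    intro l hl
    obtain ⟨c, hc, hc'⟩ := img l hl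
    rw [sgl_inr, h2, hc, symp_add_right, symp_smul_right, sUE, hr, mul_one, sFU, hc']
  have key : ∀ k l : Fin n ⊕ Fin n,
      symp (C₀ (sgl n k)) (C₀ (sgl n l)) = symp (sgl n k) (sgl n l) := by
    intro k l
    by_cases hk : k = Sum.inr z
    · by_cases hl : l = Sum.inr z
      · subst hk; subst hl; rw [sgl_inr, h2, symp_self, symp_self]
      · subst hk; exact keyA l hl
    · by_cases hl : l = Sum.inr z
      · subst hl
        rw [symp_comm, keyA k hk, symp_comm]
      · obtain ⟨a, ha, _⟩ := img k hk
        obtain ⟨b, hb, _⟩ := img l hl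
        rw [ha, hb, symp_add_left, symp_add_right, symp_add_right, symp_smul_left,
          symp_smul_left, symp_smul_right, symp_smul_right, sUE, sEU, sEE, sglz k hk,
          sglz l hl]
        ring
  rw [symp_expand C₀ u v]
  have := symp_expand (LinearMap.id (R := ZMod 2) (M := (Fin n ⊕ Fin n) → ZMod 2)) u v
  simp only [LinearMap.id_coe, id_eq] at this
  rw [this]
  exact Finset.sum_congr rfl fun k _ => Finset.sum_congr rfl fun l _ => by rw [key]
end
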